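/- arXiv:1912.00160 — 4 statements merged into one kernel-verified Lean document; each statement's English description precedes it below -/
import Mathlib

section
/- Define m_n := (n!)^2 K_n^2 for n ≥ 1, where K_n := ∫_0^∞ (ln(1+x))^n e^{-x} dx. Then the sequence (m_n) satisfies Carleman's condition, i.e., the series ∑_{n=1}^∞ m_n^{-1/(2n)} diverges to infinity, but it does not satisfy the quadratic rate of growth condition: there is no constant C > 0 such that m_{n+1} ≤ C (n+1)^2 m_n for all n ≥ 1. -/
/-! Concavity of the logarithm gives
`log (1 + x) ≤ (1 + log 2n) (1 + x / 2n) ≤ (1 + log 2n) e^{x/2n}`, so `Kₙ ≤ 2 (1 + log 2n)ⁿ`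
and `mₙ^{-1/(2n)} ≥ 1 / (2n (1 + log 2 + log n))`, a series which diverges by Cauchy
condensation. Conversely, restricting the integral to `x > eᵗ - 1` gives `Kₙ ≥ e^{1 - eᵗ} tⁿ`
for every `t ≥ 0`, so `Kₙ` outgrows every geometric sequence, while the quadratic growth
condition would force `K_{n+1} ≤ √C Kₙ`. -/

open MeasureTheory Filter Topology Real
open scoped Nat

noncomputable def logMoment (n : ℕ) : ℝ :=
  ∫ x in Set.Ioi (0 : ℝ), log (1 + x) ^ n * exp (-x)

lemma integrableOn_logMoment (n : ℕ) :
    IntegrableOn (fun x : ℝ => log (1 + x) ^ n * exp (-x)) (Set.Ioi 0) := by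
  have hGamma : IntegrableOn (fun x : ℝ => x ^ n * exp (-x)) (Set.Ioi 0) :=
    (GammaIntegral_convergent (s := n + 1) (by positivity)).congr_fun
      (fun x _ => by simp [mul_comm]) measurableSet_Ioi
  refine hGamma.mono' (by fun_prop) ?_
  filter_upwards [ae_restrict_mem measurableSet_Ioi] with x (hx : 0 < x)
  have hlog : 0 ≤ log (1 + x) := log_nonneg (by linarith)
  rw [norm_of_nonneg (by positivity)]
  gcongr
  linarith [log_le_sub_one_of_pos (x := 1 + x) (by linarith)]

lemma pow_mul_exp_one_sub_exp_le_logMoment (n : ℕ) {t : ℝ} (ht : 0 ≤ t) :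
    t ^ n * exp (1 - exp t) ≤ logMoment n := by
  have ha : (0 : ℝ) ≤ exp t - 1 := by linarith [add_one_le_exp t]
  have hsub : Set.Ioi (exp t - 1) ⊆ Set.Ioi 0 := Set.Ioi_subset_Ioi ha
  calc t ^ n * exp (1 - exp t) = ∫ x in Set.Ioi (exp t - 1), t ^ n * exp (-x) := by
        rw [integral_const_mul, integral_exp_neg_Ioi, neg_sub]
    _ ≤ ∫ x in Set.Ioi (exp t - 1), log (1 + x) ^ n * exp (-x) := by
        refine setIntegral_mono_on ((integrableOn_exp_neg_Ioi _).const_mul _)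
          ((integrableOn_logMoment n).mono_set hsub) measurableSet_Ioi fun x hx => ?_
        have hlog : t < log (1 + x) := by
          rw [lt_log_iff_exp_lt (by linarith [hx.out])]
          linarith [hx.out]
        gcongr
    _ ≤ logMoment n := by
        refine setIntegral_mono_set (integrableOn_logMoment n) ?_ hsub.eventuallyLE
        filter_upwards [ae_restrict_mem measurableSet_Ioi] with x (hx : 0 < x)
        have hlog : 0 ≤ log (1 + x) := log_nonneg (by linarith)
        positivity

lemma logMoment_pos (n : ℕ) : 0 < logMoment n :=
  (by positivity : (0 : ℝ) < 1 ^ n * exp (1 - exp 1)).trans_le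
    (pow_mul_exp_one_sub_exp_le_logMoment n zero_le_one)

lemma log_one_add_le_mul_one_add_div {x b : ℝ} (hx : 0 ≤ x) (hb : 1 ≤ b) :
    log (1 + x) ≤ (1 + log b) * (1 + x / b) := by
  have hb0 : 0 < b := by linarith
  have h := log_le_sub_one_of_pos (x := (1 + x) / b) (by positivity)
  rw [log_div (by positivity) hb0.ne', add_div] at h
  have hinv : 1 / b ≤ 1 := (div_le_one hb0).2 hb
  have hprod : 0 ≤ log b * (x / b) := mul_nonneg (log_nonneg hb) (by positivity)
  nlinarith

lemma log_one_add_pow_mul_exp_neg_le {n : ℕ} (hn : n ≠ 0) {x : ℝ} (hx : 0 ≤ x) :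
    log (1 + x) ^ n * exp (-x) ≤ (1 + log (2 * n)) ^ n * exp (-(1 / 2) * x) := by
  have h2n : (1 : ℝ) ≤ 2 * n := by
    have : (1 : ℝ) ≤ n := by exact_mod_cast Nat.one_le_iff_ne_zero.2 hn
    linarith
  have hlog : 0 ≤ log (1 + x) := log_nonneg (by linarith)
  have hlog2n : 0 ≤ log (2 * n) := log_nonneg h2n
  calc log (1 + x) ^ n * exp (-x)
      ≤ ((1 + log (2 * n)) * (1 + x / (2 * n))) ^ n * exp (-x) := by
        gcongr
        exact log_one_add_le_mul_one_add_div hx h2n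
    _ ≤ ((1 + log (2 * n)) * exp (x / (2 * n))) ^ n * exp (-x) := by
        gcongr
        linarith [add_one_le_exp (x / (2 * n))]
    _ = (1 + log (2 * n)) ^ n * exp (-(1 / 2) * x) := by
        rw [mul_pow, ← exp_nat_mul, mul_assoc, ← exp_add]
        congr 2
        field_simp
        ring

lemma logMoment_le {n : ℕ} (hn : n ≠ 0) : logMoment n ≤ 2 * (1 + log (2 * n)) ^ n := by
  calc logMoment n ≤ ∫ x in Set.Ioi (0 : ℝ), (1 + log (2 * n)) ^ n * exp (-(1 / 2) * x) :=
        setIntegral_mono_on (integrableOn_logMoment n)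
          ((exp_neg_integrableOn_Ioi 0 (by norm_num)).const_mul _) measurableSet_Ioi
          fun x hx => log_one_add_pow_mul_exp_neg_le hn (le_of_lt hx)
    _ = 2 * (1 + log (2 * n)) ^ n := by
        rw [integral_const_mul, integral_exp_mul_Ioi (by norm_num), mul_zero, exp_zero]
        ring

lemma factorial_mul_logMoment_le {n : ℕ} (hn : n ≠ 0) :
    n ! * logMoment n ≤ (2 * n * (1 + log 2 + log n)) ^ n := by
  have hK := (logMoment_pos n).le
  have hlog : log (2 * n) = log 2 + log n := log_mul two_ne_zero (by exact_mod_cast hn)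
  calc (n ! : ℝ) * logMoment n ≤ n ^ n * (2 * (1 + log 2 + log n) ^ n) := by
        gcongr
        · exact_mod_cast Nat.factorial_le_pow n
        · rw [add_assoc, ← hlog]
          exact logMoment_le hn
    _ ≤ n ^ n * (2 ^ n * (1 + log 2 + log n) ^ n) := by
        gcongr
        exact le_self_pow₀ one_le_two hn
    _ = (2 * n * (1 + log 2 + log n)) ^ n := by rw [mul_pow, mul_pow]; ring

lemma inv_le_sq_rpow_of_le_pow {P B : ℝ} {n : ℕ} (hn : n ≠ 0) (hP : 0 < P) (hB : 0 < B)
    (hPB : P ≤ B ^ n) : B⁻¹ ≤ (P ^ 2) ^ (-1 / (2 * n : ℝ)) := by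
  have hn' : (n : ℝ) ≠ 0 := by exact_mod_cast hn
  calc B⁻¹ = (B ^ n) ^ (-(n : ℝ)⁻¹) := by
        rw [← rpow_natCast, ← rpow_mul hB.le, mul_neg, mul_inv_cancel₀ hn', rpow_neg_one]
    _ ≤ P ^ (-(n : ℝ)⁻¹) := rpow_le_rpow_of_nonpos hP hPB (by simp)
    _ = (P ^ 2) ^ (-1 / (2 * n : ℝ)) := by
        rw [← rpow_natCast, ← rpow_mul hP.le]
        congr 1
        field_simp
        norm_num

lemma inv_le_factorial_mul_logMoment_sq_rpow {n : ℕ} (hn : n ≠ 0) :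
    (2 * n * (1 + log 2 + log n))⁻¹ ≤ ((n ! * logMoment n) ^ 2) ^ (-1 / (2 * n : ℝ)) := by
  have hn' : (0 : ℝ) < n := by positivity
  exact inv_le_sq_rpow_of_le_pow hn (mul_pos (by positivity) (logMoment_pos n)) (by positivity)
    (factorial_mul_logMoment_le hn)

lemma not_summable_inv_mul_add_log {a : ℝ} (ha : 0 < a) :
    ¬ Summable fun n : ℕ => ((n : ℝ) * (a + log n))⁻¹ := by
  have hnonneg (n : ℕ) : 0 ≤ ((n : ℝ) * (a + log n))⁻¹ := by
    have := log_natCast_nonneg n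
    positivity
  have hanti ⦃m n : ℕ⦄ (hm : 0 < m) (hmn : m ≤ n) :
      ((n : ℝ) * (a + log n))⁻¹ ≤ ((m : ℝ) * (a + log m))⁻¹ := by
    have hm' : (0 : ℝ) < m := by exact_mod_cast hm
    have hmn' : (m : ℝ) ≤ n := by exact_mod_cast hmn
    have := log_natCast_nonneg m
    gcongr
  rw [← summable_condensed_iff_of_nonneg hnonneg hanti]
  intro hs
  refine Real.not_summable_natCast_inv ((summable_nat_add_iff 1).1 ?_)
  refine (hs.mul_left (a + 1)).of_nonneg_of_le (fun k => by positivity) fun k => ?_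
  have hlog2 : log 2 ≤ 1 := by linarith [log_two_lt_d9]
  have hpos : 0 < a + k * log 2 := by have := log_pos one_lt_two; positivity
  have hcond :
      (2 : ℝ) ^ k * (((2 ^ k : ℕ) : ℝ) * (a + log (2 ^ k : ℕ)))⁻¹ = (a + k * log 2)⁻¹ := by
    push_cast
    rw [log_pow]
    field_simp
  rw [hcond, ← div_eq_mul_inv, Nat.cast_add, Nat.cast_one, le_div_iff₀ hpos,
    inv_mul_le_iff₀ (by positivity)]
  nlinarith [mul_le_mul_of_nonneg_left hlog2 (Nat.cast_nonneg (α := ℝ) k)]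

lemma tendsto_sum_Icc_atTop_of_not_summable {f g : ℕ → ℝ} (hf : ∀ n, 0 ≤ f n)
    (hns : ¬ Summable f) (hfg : ∀ n, 1 ≤ n → f n ≤ g n) :
    Tendsto (fun N => ∑ n ∈ Finset.Icc 1 N, g n) atTop atTop := by
  have hrange := (not_summable_iff_tendsto_nat_atTop_of_nonneg hf).1 hns
  have hIcc : Tendsto (fun N => ∑ n ∈ Finset.Icc 1 N, f n) atTop atTop := by
    refine (tendsto_atTop_add_const_right _ (-f 0)
      (hrange.comp (tendsto_add_atTop_nat 1))).congr fun N => ?_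
    rw [Function.comp_apply, Finset.sum_range_succ', ← Finset.Ico_add_one_right_eq_Icc,
      Finset.sum_Ico_eq_sum_range]
    simp [add_comm]
  exact tendsto_atTop_mono (fun N => Finset.sum_le_sum fun n hn =>
    hfg n (Finset.mem_Icc.1 hn).1) hIcc

lemma not_forall_le_mul_of_forall_pow_le {a : ℕ → ℝ}
    (h : ∀ t > 0, ∃ c > 0, ∀ n, c * t ^ n ≤ a n) (C : ℝ) :
    ¬ ∀ n, 1 ≤ n → a (n + 1) ≤ C * a n := by
  intro hC
  obtain ⟨c₁, hc₁, ha₁⟩ := h 1 one_pos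
  have ha (n : ℕ) : 0 ≤ a n := by nlinarith [ha₁ n, one_pow (M := ℝ) n]
  have hgeom (n : ℕ) : a (n + 1) ≤ |C| ^ n * a 1 := by
    induction n with
    | zero => simp
    | succ n ih =>
      calc a (n + 2) ≤ C * a (n + 1) := hC _ (by omega)
        _ ≤ |C| * (|C| ^ n * a 1) := by gcongr; exacts [ha _, le_abs_self C]
        _ = |C| ^ (n + 1) * a 1 := by ring
  set t := |C| + 1
  have ht : 0 < t := by positivity
  obtain ⟨c, hc, hct⟩ := h t ht
  have hlim : Tendsto (fun n => (|C| / t) ^ n * a 1) atTop (𝓝 0) := by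
    simpa using (tendsto_pow_atTop_nhds_zero_of_lt_one (by positivity)
      ((div_lt_one ht).2 (by linarith))).mul_const (a 1)
  have : c * t ≤ 0 := ge_of_tendsto' hlim fun n => by
    rw [div_pow, div_mul_eq_mul_div, le_div_iff₀ (by positivity)]
    calc c * t * t ^ n = c * t ^ (n + 1) := by ring
      _ ≤ |C| ^ n * a 1 := (hct (n + 1)).trans (hgeom n)
  nlinarith

/-- The moments `mₙ = (n!)² Kₙ²`, with `Kₙ = ∫_0^∞ (ln(1+x))ⁿ e^{-x} dx`, satisfy
Carleman's condition `∑ₙ mₙ^{-1/(2n)} = ∞` but do not satisfy the quadratic rate of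
growth condition `m_{n+1} ≤ C (n+1)² mₙ`. -/
theorem carleman_holds_quadratic_growth_fails
    (K : ℕ → ℝ)
    (hK : ∀ n : ℕ, K n = ∫ x in Set.Ioi (0 : ℝ), (Real.log (1 + x)) ^ n * Real.exp (-x))
    (m : ℕ → ℝ)
    (hm : ∀ n : ℕ, m n = (n.factorial : ℝ) ^ 2 * K n ^ 2) :
    Tendsto (fun N : ℕ => ∑ n ∈ Finset.Icc 1 N, m n ^ (-(1 : ℝ) / (2 * n)))
      atTop atTop ∧
    ¬ ∃ C : ℝ, 0 < C ∧ ∀ n : ℕ, 1 ≤ n → m (n + 1) ≤ C * (n + 1) ^ 2 * m n := by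
  obtain rfl : K = logMoment := funext hK
  have hm' (n : ℕ) : m n = ((n ! : ℝ) * logMoment n) ^ 2 := by rw [hm, mul_pow]
  constructor
  · refine tendsto_sum_Icc_atTop_of_not_summable (f := fun n => (2 * n * (1 + log 2 + log n))⁻¹)
      (fun n => by positivity) ?_ fun n hn => ?_
    · simp_rw [mul_assoc, mul_inv (2 : ℝ)]
      rw [summable_mul_left_iff (by norm_num)]
      exact not_summable_inv_mul_add_log (by positivity)
    · rw [hm']
      exact inv_le_factorial_mul_logMoment_sq_rpow (by omega)
  · rintro ⟨C, hC, h⟩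
    refine not_forall_le_mul_of_forall_pow_le (fun t ht => ⟨_, exp_pos (1 - exp t), fun n =>
      (mul_comm _ _).trans_le (pow_mul_exp_one_sub_exp_le_logMoment n ht.le)⟩) √C fun n hn => ?_
    have hsq : logMoment (n + 1) ^ 2 ≤ C * logMoment n ^ 2 := by
      refine le_of_mul_le_mul_left ?_ (by positivity : (0 : ℝ) < ((n + 1) * n !) ^ 2)
      calc ((n + 1) * n ! : ℝ) ^ 2 * logMoment (n + 1) ^ 2 = m (n + 1) := by
            rw [hm', Nat.factorial_succ]; push_cast; ring
        _ ≤ C * (n + 1) ^ 2 * m n := h n hn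
        _ = ((n + 1) * n ! : ℝ) ^ 2 * (C * logMoment n ^ 2) := by rw [hm']; ring
    calc logMoment (n + 1) ≤ √(C * logMoment n ^ 2) := (le_abs_self _).trans (abs_le_sqrt hsq)
      _ = √C * logMoment n := by rw [sqrt_mul' C (sq_nonneg _), sqrt_sq (logMoment_pos n).le]
end

section
/- Define m_n := (n!)^2 K_n^2 for n ≥ 1, where K_n := ∫_0^∞ (ln(1+x))^n e^{-x} dx. Then m_n^{1/(2n)} = (n/e) · ln(n+1) · (1 + o(1)) as n → ∞; that is, the quotient e · m_n^{1/(2n)} / (n · ln(n+1)) tends to 1 as n → ∞. -/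
/-!
By Stirling's formula `(n!)^{1/n} ~ n/e`, so it suffices to show `Kₙ^{1/n} ~ L := log (n + 1)`.
From above, the tangent line of the concave `log (1 + x)` at `x = n` gives
`log (1 + x) ≤ L + x/n ≤ L exp (x/(nL))`, hence
`Kₙ ≤ Lⁿ ∫ e^{-(1 - 1/L)x} = Lⁿ / (1 - 1/L)`.
From below, restricting the integral to `x > a := n/L` gives `Kₙ ≥ log (1 + a)ⁿ e^{-a}`, and
`log (1 + a) ≥ L - log L`, so `Kₙ^{1/n} ≥ (L - log L) e^{-1/L}`.
-/

open MeasureTheory Filter Topology Real Set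

noncomputable def logOneAddMoment (n : ℕ) : ℝ :=
  ∫ x in Ioi (0 : ℝ), log (1 + x) ^ n * exp (-x)

lemma log_le_log_add_sub_div {x y : ℝ} (hx : 0 < x) (hy : 0 < y) :
    log x ≤ log y + (x - y) / y := by
  have h := log_le_sub_one_of_pos (div_pos hx hy)
  rw [log_div hx.ne' hy.ne'] at h
  rw [sub_div, div_self hy.ne']
  linarith

lemma add_le_mul_exp_div {L : ℝ} (hL : 0 < L) (y : ℝ) : L + y ≤ L * exp (y / L) := by
  have h := mul_le_mul_of_nonneg_left (add_one_le_exp (y / L)) hL.le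
  rwa [mul_add, mul_div_cancel₀ _ hL.ne', mul_one, add_comm] at h

lemma log_one_add_pow_le {n : ℕ} (hn : n ≠ 0) {x : ℝ} (hx : 0 ≤ x) :
    log (1 + x) ^ n ≤ log (n + 1) ^ n * exp (x / log (n + 1)) := by
  have hn' : (0 : ℝ) < n := by positivity
  have hL : 0 < log ((n : ℝ) + 1) := log_pos (by linarith)
  have htangent : log (1 + x) ≤ log (n + 1) + x / n := by
    have h := log_le_log_add_sub_div (x := 1 + x) (y := n + 1) (by linarith) (by linarith)
    have : (1 + x - (n + 1)) / (n + 1) ≤ x / n := by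
      rw [div_le_div_iff₀ (by linarith) hn']; nlinarith
    linarith
  calc log (1 + x) ^ n ≤ (log (n + 1) * exp (x / n / log (n + 1))) ^ n :=
        pow_le_pow_left₀ (log_nonneg (by linarith)) (htangent.trans (add_le_mul_exp_div hL _)) n
    _ = log (n + 1) ^ n * exp (x / log (n + 1)) := by
        rw [mul_pow, ← exp_nat_mul]; congr 2; field_simp

lemma integrableOn_log_one_add_pow_mul_exp_neg (n : ℕ) :
    IntegrableOn (fun x : ℝ => log (1 + x) ^ n * exp (-x)) (Ioi 0) := by
  have hn : (-1 : ℝ) < n := by linarith [n.cast_nonneg (α := ℝ)]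
  refine (integrableOn_rpow_mul_exp_neg_rpow (p := 1) hn one_pos).mono' ?_ ?_
  · exact (((measurable_log.comp (measurable_const.add measurable_id)).pow_const n).mul
      measurable_id.neg.exp).aestronglyMeasurable
  · filter_upwards [ae_restrict_mem measurableSet_Ioi] with x (hx : 0 < x)
    have hlog : 0 ≤ log (1 + x) := log_nonneg (by linarith)
    rw [norm_of_nonneg (by positivity), rpow_natCast, rpow_one]
    gcongr
    linarith [log_le_sub_one_of_pos (by linarith : 0 < 1 + x)]

lemma log_one_add_pow_mul_exp_neg_nonneg (n : ℕ) {x : ℝ} (hx : 0 ≤ x) :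
    0 ≤ log (1 + x) ^ n * exp (-x) :=
  mul_nonneg (pow_nonneg (log_nonneg (by linarith)) n) (exp_pos _).le

lemma logOneAddMoment_nonneg (n : ℕ) : 0 ≤ logOneAddMoment n :=
  setIntegral_nonneg measurableSet_Ioi fun _ hx =>
    log_one_add_pow_mul_exp_neg_nonneg n (le_of_lt hx)

lemma one_lt_log_natCast_add_one {n : ℕ} (hn : 2 ≤ n) : 1 < log ((n : ℝ) + 1) := by
  have : (2 : ℝ) ≤ n := by exact_mod_cast hn
  rw [lt_log_iff_exp_lt (by linarith)]
  linarith [exp_one_lt_d9]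

lemma logOneAddMoment_le {n : ℕ} (hn : 2 ≤ n) :
    logOneAddMoment n ≤ log (n + 1) ^ n / (1 - (log (n + 1))⁻¹) := by
  set L := log ((n : ℝ) + 1)
  have hL : 1 < L := one_lt_log_natCast_add_one hn
  have hrate : L⁻¹ - 1 < 0 := by linarith [inv_lt_one_of_one_lt₀ hL]
  have hbound : ∀ x ∈ Ioi (0 : ℝ),
      log (1 + x) ^ n * exp (-x) ≤ L ^ n * exp ((L⁻¹ - 1) * x) := fun x (hx : 0 < x) => by
    calc log (1 + x) ^ n * exp (-x) ≤ L ^ n * exp (x / L) * exp (-x) := by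
          gcongr; exact log_one_add_pow_le (by omega) hx.le
      _ = L ^ n * exp ((L⁻¹ - 1) * x) := by rw [mul_assoc, ← exp_add]; ring_nf
  calc logOneAddMoment n ≤ ∫ x in Ioi (0 : ℝ), L ^ n * exp ((L⁻¹ - 1) * x) :=
        setIntegral_mono_on (integrableOn_log_one_add_pow_mul_exp_neg n)
          ((integrableOn_exp_mul_Ioi hrate 0).const_mul _) measurableSet_Ioi hbound
    _ = L ^ n / (1 - L⁻¹) := by
        rw [integral_const_mul, integral_exp_mul_Ioi hrate, mul_zero, exp_zero]
        field_simp
        rw [← div_neg, neg_sub]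

lemma pow_log_one_add_mul_exp_neg_le_logOneAddMoment (n : ℕ) {a : ℝ} (ha : 0 ≤ a) :
    log (1 + a) ^ n * exp (-a) ≤ logOneAddMoment n := by
  have hsub : Ioi a ⊆ Ioi 0 := Ioi_subset_Ioi ha
  calc log (1 + a) ^ n * exp (-a) = ∫ x in Ioi a, log (1 + a) ^ n * exp (-x) := by
        rw [integral_const_mul, integral_exp_neg_Ioi]
    _ ≤ ∫ x in Ioi a, log (1 + x) ^ n * exp (-x) := by
        refine setIntegral_mono_on ((integrableOn_exp_neg_Ioi a).const_mul _)
          ((integrableOn_log_one_add_pow_mul_exp_neg n).mono_set hsub) measurableSet_Ioi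
          fun x (hx : a < x) => ?_
        gcongr
        exact log_nonneg (by linarith)
    _ ≤ logOneAddMoment n :=
        setIntegral_mono_set (integrableOn_log_one_add_pow_mul_exp_neg n)
          ((ae_restrict_mem measurableSet_Ioi).mono fun _ hx =>
            log_one_add_pow_mul_exp_neg_nonneg n (le_of_lt hx))
          hsub.eventuallyLE

lemma tendsto_rpow_one_div_natCast_of_tendsto {c : ℕ → ℝ} {a : ℝ} (ha : a ≠ 0)
    (hc : Tendsto c atTop (𝓝 a)) :
    Tendsto (fun n : ℕ => c n ^ (1 / (n : ℝ))) atTop (𝓝 1) := by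
  simpa using hc.rpow tendsto_one_div_atTop_nhds_zero_nat (Or.inl ha)

lemma exp_one_mul_factorial_rpow_div_eq {n : ℕ} (hn : n ≠ 0) :
    exp 1 * (n.factorial : ℝ) ^ (1 / (n : ℝ)) / n =
      Stirling.stirlingSeq n ^ (1 / (n : ℝ)) * (2 * n : ℝ) ^ (1 / (2 * n : ℝ)) := by
  have hfactorial : (n.factorial : ℝ) =
      Stirling.stirlingSeq n * √(2 * n) * (n / exp 1) ^ n := by
    rw [Stirling.stirlingSeq, mul_assoc, div_mul_cancel₀]
    positivity
  have hs : 0 ≤ Stirling.stirlingSeq n :=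
    (sqrt_nonneg _).trans (Stirling.sqrt_pi_le_stirlingSeq hn)
  rw [hfactorial, mul_rpow (by positivity) (by positivity), mul_rpow hs (by positivity),
    one_div (n : ℝ), pow_rpow_inv_natCast (by positivity) hn, sqrt_eq_rpow,
    ← rpow_mul (by positivity)]
  field_simp

lemma tendsto_exp_one_mul_factorial_rpow_div :
    Tendsto (fun n : ℕ => exp 1 * (n.factorial : ℝ) ^ (1 / (n : ℝ)) / n) atTop (𝓝 1) := by
  have hstirling := tendsto_rpow_one_div_natCast_of_tendsto (by positivity)
    Stirling.tendsto_stirlingSeq_sqrt_pi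
  have hpoly : Tendsto (fun n : ℕ => (2 * n : ℝ) ^ (1 / (2 * n : ℝ))) atTop (𝓝 1) :=
    tendsto_rpow_div.comp (tendsto_natCast_atTop_atTop.const_mul_atTop two_pos)
  simpa using (hstirling.mul hpoly).congr' <| (eventually_ne_atTop 0).mono
    fun n hn => (exp_one_mul_factorial_rpow_div_eq hn).symm

lemma le_logOneAddMoment_rpow_div_log {n : ℕ} (hn : 2 ≤ n) :
    (1 - log (log (n + 1)) / log (n + 1)) * exp (-(log (n + 1))⁻¹) ≤
      logOneAddMoment n ^ (1 / (n : ℝ)) / log (n + 1) := by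
  set L := log ((n : ℝ) + 1)
  have hL : 1 < L := one_lt_log_natCast_add_one hn
  have hn' : (0 : ℝ) < n := by positivity
  have ha : 0 ≤ (n : ℝ) / L := div_nonneg hn'.le (by linarith)
  have hlog : L - log L ≤ log (1 + n / L) := by
    have h : ((n : ℝ) + 1) / L ≤ 1 + n / L := by
      rw [div_le_iff₀ (by linarith), add_mul, div_mul_cancel₀ _ (by linarith)]; linarith
    calc L - log L = log ((n + 1) / L) := by
          rw [log_div (by positivity) (by linarith)]
      _ ≤ log (1 + n / L) := log_le_log (by positivity) h
  have hlog_nonneg : 0 ≤ log (1 + n / L) := log_nonneg (by linarith)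
  have hroot : (log (1 + n / L) ^ n * exp (-(n / L))) ^ (1 / (n : ℝ)) =
      log (1 + n / L) * exp (-L⁻¹) := by
    rw [mul_rpow (by positivity) (exp_pos _).le, one_div (n : ℝ),
      pow_rpow_inv_natCast hlog_nonneg (by omega), ← exp_mul]
    field_simp
  rw [le_div_iff₀ (by linarith)]
  calc (1 - log L / L) * exp (-L⁻¹) * L = (L - log L) * exp (-L⁻¹) := by
        field_simp
    _ ≤ log (1 + n / L) * exp (-L⁻¹) := by gcongr
    _ ≤ logOneAddMoment n ^ (1 / (n : ℝ)) := by
        rw [← hroot]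
        exact rpow_le_rpow (by positivity)
          (pow_log_one_add_mul_exp_neg_le_logOneAddMoment n ha) (by positivity)

lemma logOneAddMoment_rpow_div_log_le {n : ℕ} (hn : 2 ≤ n) :
    logOneAddMoment n ^ (1 / (n : ℝ)) / log (n + 1) ≤
      1 / (1 - (log (n + 1))⁻¹) ^ (1 / (n : ℝ)) := by
  set L := log ((n : ℝ) + 1)
  have hL : 1 < L := one_lt_log_natCast_add_one hn
  have hc : 0 < 1 - L⁻¹ := by linarith [inv_lt_one_of_one_lt₀ hL]
  have hroot : (L ^ n / (1 - L⁻¹)) ^ (1 / (n : ℝ)) = L / (1 - L⁻¹) ^ (1 / (n : ℝ)) := by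
    rw [div_rpow (by positivity) hc.le, one_div (n : ℝ),
      pow_rpow_inv_natCast (by linarith) (by omega)]
  rw [div_le_iff₀ (by linarith), one_div_mul_eq_div, ← hroot]
  exact rpow_le_rpow (logOneAddMoment_nonneg n) (logOneAddMoment_le hn) (by positivity)

lemma tendsto_log_natCast_add_one_atTop :
    Tendsto (fun n : ℕ => log ((n : ℝ) + 1)) atTop atTop :=
  tendsto_log_atTop.comp (tendsto_atTop_add_const_right _ 1 tendsto_natCast_atTop_atTop)

lemma tendsto_logOneAddMoment_rpow_div_log :
    Tendsto (fun n : ℕ => logOneAddMoment n ^ (1 / (n : ℝ)) / log (n + 1)) atTop (𝓝 1) := by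
  have hlower : Tendsto (fun L : ℝ => (1 - log L / L) * exp (-L⁻¹)) atTop (𝓝 1) := by
    have hlog : Tendsto (fun L : ℝ => log L / L) atTop (𝓝 0) := by
      simpa using tendsto_pow_log_div_mul_add_atTop 1 0 1 one_ne_zero
    have hinv : Tendsto (fun L : ℝ => -L⁻¹) atTop (𝓝 0) := by
      simpa using (tendsto_inv_atTop_zero (𝕜 := ℝ)).neg
    simpa using (tendsto_const_nhds.sub hlog).mul (tendsto_exp_nhds_zero_nhds_one.comp hinv)
  have hupper : Tendsto (fun n : ℕ => 1 / (1 - (log ((n : ℝ) + 1))⁻¹) ^ (1 / (n : ℝ)))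
      atTop (𝓝 1) := by
    have h : Tendsto (fun n : ℕ => 1 - (log ((n : ℝ) + 1))⁻¹) atTop (𝓝 (1 - 0)) :=
      tendsto_const_nhds.sub (tendsto_inv_atTop_zero.comp tendsto_log_natCast_add_one_atTop)
    simpa using (tendsto_rpow_one_div_natCast_of_tendsto (by norm_num) h).inv₀ one_ne_zero
  exact tendsto_of_tendsto_of_tendsto_of_le_of_le' (hlower.comp tendsto_log_natCast_add_one_atTop)
    hupper ((eventually_ge_atTop 2).mono fun n hn => le_logOneAddMoment_rpow_div_log hn)
    ((eventually_ge_atTop 2).mono fun n hn => logOneAddMoment_rpow_div_log_le hn)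

/-- With `mₙ = (n!)² Kₙ²` and `Kₙ = ∫_0^∞ (ln(1+x))ⁿ e^{-x} dx`, one has
`mₙ^{1/(2n)} = (n/e) ln(n+1) (1 + o(1))` as `n → ∞`, i.e. the quotient
`e · mₙ^{1/(2n)} / (n ln(n+1))` tends to `1`. -/
theorem moment_root_asymptotics
    (K : ℕ → ℝ)
    (hK : ∀ n : ℕ, K n = ∫ x in Set.Ioi (0 : ℝ), (Real.log (1 + x)) ^ n * Real.exp (-x))
    (m : ℕ → ℝ)
    (hm : ∀ n : ℕ, m n = (n.factorial : ℝ) ^ 2 * K n ^ 2) :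
    Tendsto
      (fun n : ℕ =>
        Real.exp 1 * m n ^ ((1 : ℝ) / (2 * n)) / (n * Real.log (n + 1)))
      atTop (𝓝 1) := by
  obtain rfl : K = logOneAddMoment := funext hK
  have hroot (n : ℕ) : m n ^ ((1 : ℝ) / (2 * n)) =
      (n.factorial : ℝ) ^ (1 / (n : ℝ)) * logOneAddMoment n ^ (1 / (n : ℝ)) := by
    have hK_nonneg := logOneAddMoment_nonneg n
    rw [hm n, ← mul_pow, ← rpow_natCast, ← rpow_mul (by positivity),
      mul_rpow (by positivity) hK_nonneg]
    push_cast
    ring_nf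
  have h := tendsto_exp_one_mul_factorial_rpow_div.mul tendsto_logOneAddMoment_rpow_div_log
  rw [mul_one] at h
  refine h.congr fun n => ?_
  rw [hroot n]
  ring
end

section
/- Let W : [0, ∞) → [0, ∞) be the Lambert W function, i.e., W(t) ≥ 0 and W(t) e^{W(t)} = t for all t ≥ 0, and define S(t) := ∫_0^∞ (ln(1+x))^t e^{-x} dx for t ≥ 0. Then S(t) = e · √(2πt) · W(t)^{t − 1/2} · e^{−t/W(t)} · (1 + o(1)) as t → ∞; that is, the quotient S(t) / (e √(2πt) W(t)^{t−1/2} e^{−t/W(t)}) tends to 1 as t → ∞. -/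
/-!
Substituting `x = eᵘ - 1` gives `S(t) = e ∫₀^∞ exp φ(u) du` with `φ(u) = t log u + u - eᵘ`.
Write `t = w eʷ`, so `w = W(t)`. Then `φ'(w) = 1`, and `-φ''(u) = t / u² + eᵘ` stays
between two bounds `c, C ~ eʷ` on the window `|u - w| ≤ δ := 1 / w²`. On the window `φ` lies
between `φ(w) + (u - w) - C (u - w)² / 2` and the same expression with `c`, so Laplace's method
gives `∫ exp φ ~ e^{φ(w)} √(2π / eʷ)`. Outside the window, concavity bounds `φ` by tangent
lines, and those pieces are negligible because `c δ² ~ eʷ / w⁴` beats every power of `w`.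
Finally, `√(2πt) W^{t-1/2} e^{-t/W} = √(2π) e^{φ(w)} e^{-w/2}`.
-/

open MeasureTheory Filter Topology Real Set

theorem le_tangent_of_antitoneOn {f f' : ℝ → ℝ} {s : Set ℝ} (hs : Convex ℝ s)
    (hf : ∀ u ∈ s, HasDerivAt f (f' u) u) (hf' : AntitoneOn f' s) {w u : ℝ}
    (hw : w ∈ s) (hu : u ∈ s) : f u ≤ f w + f' w * (u - w) := by
  have hcont : ∀ {a b}, a ∈ s → b ∈ s → ContinuousOn f (Icc a b) := fun ha hb x hx =>
    (hf x (hs.ordConnected.out ha hb hx)).continuousAt.continuousWithinAt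
  have hderiv : ∀ {a b}, a ∈ s → b ∈ s → ∀ x ∈ Ioo a b, HasDerivAt f (f' x) x :=
    fun ha hb x hx => hf x (hs.ordConnected.out ha hb (Ioo_subset_Icc_self hx))
  rcases lt_trichotomy w u with hwu | rfl | huw
  · obtain ⟨ξ, hξ, hslope⟩ := exists_hasDerivAt_eq_slope f f' hwu (hcont hw hu) (hderiv hw hu)
    have := hf' hw (hs.ordConnected.out hw hu (Ioo_subset_Icc_self hξ)) hξ.1.le
    rw [hslope, div_le_iff₀ (sub_pos.2 hwu)] at this
    linarith
  · simp
  · obtain ⟨ξ, hξ, hslope⟩ := exists_hasDerivAt_eq_slope f f' huw (hcont hu hw) (hderiv hu hw)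
    have := hf' (hs.ordConnected.out hu hw (Ioo_subset_Icc_self hξ)) hw hξ.2.le
    rw [hslope, le_div_iff₀ (sub_pos.2 huw)] at this
    linarith

theorem antitoneOn_add_mul_of_hasDerivAt_le {f f' : ℝ → ℝ} {s : Set ℝ} {c : ℝ}
    (hs : Convex ℝ s) (hf : ∀ u ∈ s, HasDerivAt f (f' u) u) (hc : ∀ u ∈ s, f' u ≤ -c) :
    AntitoneOn (fun u => f u + c * u) s := by
  have hderiv : ∀ u ∈ s, HasDerivAt (fun u => f u + c * u) (f' u + c) u := fun u hu => by
    simpa using (hf u hu).fun_add ((hasDerivAt_id' u).const_mul c)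
  exact antitoneOn_of_hasDerivWithinAt_nonpos hs
    (fun u hu => (hderiv u hu).continuousAt.continuousWithinAt)
    (fun u hu => (hderiv u (interior_subset hu)).hasDerivWithinAt)
    (fun u hu => by linarith [hc u (interior_subset hu)])

theorem le_quadratic_of_deriv2_le {f f' f'' : ℝ → ℝ} {s : Set ℝ} {c : ℝ} (hs : Convex ℝ s)
    (hf : ∀ u ∈ s, HasDerivAt f (f' u) u) (hf' : ∀ u ∈ s, HasDerivAt f' (f'' u) u)
    (hc : ∀ u ∈ s, f'' u ≤ -c) {w u : ℝ} (hw : w ∈ s) (hu : u ∈ s) :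
    f u ≤ f w + f' w * (u - w) - c * (u - w) ^ 2 / 2 := by
  have hg : ∀ u ∈ s, HasDerivAt (fun u => f u + c * (u - w) ^ 2 / 2) (f' u + c * (u - w)) u :=
    fun u hu => ((hf u hu).fun_add ((((hasDerivAt_id' u).sub_const w).fun_pow 2).const_mul c
      |>.div_const 2)).congr_deriv (by simp; ring)
  have hg' : AntitoneOn (fun u => f' u + c * (u - w)) s := fun a ha b hb hab => by
    have := antitoneOn_add_mul_of_hasDerivAt_le hs hf' hc ha hb hab
    simp only at this ⊢
    linarith
  have := le_tangent_of_antitoneOn hs hg hg' hw hu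
  simp only [sub_self, mul_zero, add_zero, ne_eq, OfNat.ofNat_ne_zero, not_false_eq_true,
    zero_pow, zero_div] at this
  linarith

theorem quadratic_le_of_le_deriv2 {f f' f'' : ℝ → ℝ} {s : Set ℝ} {C : ℝ} (hs : Convex ℝ s)
    (hf : ∀ u ∈ s, HasDerivAt f (f' u) u) (hf' : ∀ u ∈ s, HasDerivAt f' (f'' u) u)
    (hC : ∀ u ∈ s, -C ≤ f'' u) {w u : ℝ} (hw : w ∈ s) (hu : u ∈ s) :
    f w + f' w * (u - w) - C * (u - w) ^ 2 / 2 ≤ f u := by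
  have := le_quadratic_of_deriv2_le (f := -f) (f' := -f') (f'' := -f'') hs
    (fun u hu => (hf u hu).neg) (fun u hu => (hf' u hu).neg)
    (fun u hu => neg_le_neg (hC u hu)) hw hu
  simp only [Pi.neg_apply] at this
  linarith

theorem integrable_exp_sub_mul_sq {c : ℝ} (hc : 0 < c) (A w : ℝ) :
    Integrable (fun u => exp (A - c * (u - w) ^ 2 / 2)) := by
  refine (((integrable_exp_neg_mul_sq (half_pos hc)).comp_sub_right w).const_mul
    (exp A)).congr (Eventually.of_forall fun u => ?_)
  simp only [← exp_add]
  ring_nf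

theorem integral_exp_sub_mul_sq (A c w : ℝ) :
    ∫ u, exp (A - c * (u - w) ^ 2 / 2) = exp A * √(2 * π / c) := by
  have h : (fun u => exp (A - c * (u - w) ^ 2 / 2)) =
      fun u => exp A * exp (-(c / 2) * (u - w) ^ 2) := by
    ext u; rw [← exp_add]; ring_nf
  rw [h, integral_const_mul, integral_sub_right_eq_self (fun u => exp (-(c / 2) * u ^ 2)) w,
    integral_gaussian, div_div_eq_mul_div, mul_comm π]

theorem integrableOn_exp_of_le {φ g : ℝ → ℝ} {s : Set ℝ} (hs : MeasurableSet s)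
    (hφ : Measurable φ) (hg : IntegrableOn (fun u => exp (g u)) s)
    (h : ∀ u ∈ s, φ u ≤ g u) : IntegrableOn (fun u => exp (φ u)) s :=
  hg.mono' (hφ.exp.aestronglyMeasurable) <| ae_restrict_of_forall_mem hs fun u hu => by
    rw [norm_of_nonneg (exp_nonneg _)]
    exact exp_le_exp.2 (h u hu)

theorem integrableOn_Ioi_exp_and_setIntegral_le {φ : ℝ → ℝ} (hφ : Measurable φ)
    {p q w K A B c a : ℝ} (hp : 0 < p) (hpq : p ≤ q) (hc : 0 < c) (ha : a < 0)
    (hleft : ∀ u ∈ Ioo 0 p, φ u ≤ K) (hmid : ∀ u ∈ Icc p q, φ u ≤ A - c * (u - w) ^ 2 / 2)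
    (hright : ∀ u ∈ Ioi q, φ u ≤ B + a * (u - q)) :
    IntegrableOn (fun u => exp (φ u)) (Ioi 0) ∧
      ∫ u in Ioi 0, exp (φ u) ≤ p * exp K + exp A * √(2 * π / c) + exp B / -a := by
  have hK : IntegrableOn (fun _ => exp K) (Ioo 0 p) := integrableOn_const measure_Ioo_lt_top.ne
  have hA : IntegrableOn (fun u => exp (A - c * (u - w) ^ 2 / 2)) (Icc p q) :=
    (integrable_exp_sub_mul_sq hc A w).integrableOn
  have hBexp : (fun u => exp (B + a * (u - q))) = fun u => exp (B - a * q) * exp (a * u) := by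
    ext u; rw [← exp_add]; ring_nf
  have hB : IntegrableOn (fun u => exp (B + a * (u - q))) (Ioi q) :=
    hBexp ▸ (integrableOn_exp_mul_Ioi ha q).const_mul (exp (B - a * q))
  have h₁ := integrableOn_exp_of_le measurableSet_Ioo hφ hK hleft
  have h₂ := integrableOn_exp_of_le measurableSet_Icc hφ hA hmid
  have h₃ := integrableOn_exp_of_le measurableSet_Ioi hφ hB hright
  have hIoi : Ioi (0 : ℝ) = (Ioo 0 p ∪ Icc p q) ∪ Ioi q := by
    rw [Ioo_union_Icc_eq_Ioc hp hpq, Ioc_union_Ioi_eq_Ioi (hp.le.trans hpq)]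
  have hdisj₁ : Disjoint (Ioo 0 p) (Icc p q) :=
    disjoint_left.2 fun u hu hu' => (not_le.2 hu.2) hu'.1
  have hdisj₂ : Disjoint (Ioo 0 p ∪ Icc p q) (Ioi q) :=
    disjoint_left.2 fun u hu hu' => by
      rcases hu with hu | hu
      · exact (not_lt.2 (hu.2.le.trans hpq)) hu'
      · exact (not_lt.2 hu.2) hu'
  refine ⟨hIoi ▸ (h₁.union h₂).union h₃, ?_⟩
  have hleft' : ∫ u in Ioo 0 p, exp (φ u) ≤ p * exp K := by
    calc ∫ u in Ioo 0 p, exp (φ u) ≤ ∫ _ in Ioo 0 p, exp K :=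
          setIntegral_mono_on h₁ hK measurableSet_Ioo fun u hu => exp_le_exp.2 (hleft u hu)
      _ = p * exp K := by simp [hp.le]
  have hmid' : ∫ u in Icc p q, exp (φ u) ≤ exp A * √(2 * π / c) := by
    calc ∫ u in Icc p q, exp (φ u) ≤ ∫ u in Icc p q, exp (A - c * (u - w) ^ 2 / 2) :=
          setIntegral_mono_on h₂ hA measurableSet_Icc fun u hu => exp_le_exp.2 (hmid u hu)
      _ ≤ ∫ u, exp (A - c * (u - w) ^ 2 / 2) :=
          setIntegral_le_integral (integrable_exp_sub_mul_sq hc A w)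
            (Eventually.of_forall fun _ => exp_nonneg _)
      _ = exp A * √(2 * π / c) := integral_exp_sub_mul_sq A c w
  have hright' : ∫ u in Ioi q, exp (φ u) ≤ exp B / -a := by
    calc ∫ u in Ioi q, exp (φ u) ≤ ∫ u in Ioi q, exp (B + a * (u - q)) :=
          setIntegral_mono_on h₃ hB measurableSet_Ioi fun u hu => exp_le_exp.2 (hright u hu)
      _ = exp B / -a := by
          rw [hBexp, integral_const_mul, integral_exp_mul_Ioi ha, mul_div_assoc', mul_neg,
            ← exp_add, sub_add_cancel, neg_div, div_neg]
  rw [hIoi, setIntegral_union hdisj₂ measurableSet_Ioi (h₁.union h₂) h₃,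
    setIntegral_union hdisj₁ measurableSet_Icc h₁ h₂]
  linarith

theorem le_setIntegral_Icc_exp {φ : ℝ → ℝ} {w δ A C : ℝ} (hδ : 0 ≤ δ) (hC : 0 < C)
    (hφ : IntegrableOn (fun u => exp (φ u)) (Icc (w - δ) (w + δ)))
    (h : ∀ u ∈ Icc (w - δ) (w + δ), A - C * (u - w) ^ 2 / 2 ≤ φ u) :
    exp A * (√(2 * π / C) - exp (-(C * δ ^ 2 / 4)) * √(2 * π / (C / 2)))
      ≤ ∫ u in Icc (w - δ) (w + δ), exp (φ u) := by
  set g : ℝ → ℝ := fun u => exp (A - C * (u - w) ^ 2 / 2)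
  have hg := integrable_exp_sub_mul_sq hC A w
  have hg' := integrable_exp_sub_mul_sq (half_pos hC) (A - C * δ ^ 2 / 4) w
  -- off the window, half of the Gaussian exponent is at least `C δ² / 4`
  have htail : ∫ u in (Icc (w - δ) (w + δ))ᶜ, g u
      ≤ exp (A - C * δ ^ 2 / 4) * √(2 * π / (C / 2)) := by
    rw [← integral_exp_sub_mul_sq]
    refine (setIntegral_mono_on hg.integrableOn hg'.integrableOn measurableSet_Icc.compl
      fun u hu => exp_le_exp.2 ?_).trans
        (setIntegral_le_integral hg' (Eventually.of_forall fun _ => exp_nonneg _))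
    have : δ ^ 2 ≤ (u - w) ^ 2 := by
      simp only [mem_compl_iff, mem_Icc, not_and_or, not_le] at hu
      rcases hu with hu | hu <;> nlinarith
    nlinarith
  have hcore : ∫ u in Icc (w - δ) (w + δ), g u = exp A * √(2 * π / C)
      - ∫ u in (Icc (w - δ) (w + δ))ᶜ, g u := by
    rw [← integral_exp_sub_mul_sq A C w, ← integral_add_compl measurableSet_Icc hg]
    ring
  calc exp A * (√(2 * π / C) - exp (-(C * δ ^ 2 / 4)) * √(2 * π / (C / 2)))
      = exp A * √(2 * π / C) - exp (A - C * δ ^ 2 / 4) * √(2 * π / (C / 2)) := by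
        rw [sub_eq_add_neg A, exp_add]; ring
    _ ≤ ∫ u in Icc (w - δ) (w + δ), g u := by rw [hcore]; linarith
    _ ≤ ∫ u in Icc (w - δ) (w + δ), exp (φ u) :=
        setIntegral_mono_on hg.integrableOn hφ measurableSet_Icc fun u hu =>
          exp_le_exp.2 (h u hu)

theorem tendsto_sqrt_div_mul_exp_half {a : ℝ → ℝ} {r : ℝ} (ha : ∀ᶠ w in atTop, 0 < a w)
    (h : Tendsto (fun w => exp w / a w) atTop (𝓝 r)) :
    Tendsto (fun w => √(2 * π / a w) * exp (w / 2) / √(2 * π)) atTop (𝓝 √r) := by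
  refine ((continuous_sqrt.tendsto r).comp h).congr' ?_
  filter_upwards [ha] with w hw
  rw [Function.comp_apply, exp_half, ← sqrt_mul (by positivity), ← sqrt_div (by positivity)]
  congr 1
  field_simp

theorem integral_log_one_add_rpow_mul_exp_neg (t : ℝ) :
    ∫ x in Ioi 0, log (1 + x) ^ t * exp (-x) =
      exp 1 * ∫ u in Ioi 0, exp (t * log u + u - exp u) := by
  have himage : (fun u => exp u - 1) '' Ioi 0 = Ioi 0 := by
    ext x
    constructor
    · rintro ⟨u, hu, rfl⟩
      exact sub_pos.2 (one_lt_exp_iff.2 hu)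
    · intro (hx : 0 < x)
      exact ⟨log (1 + x), log_pos (by linarith), by simp [exp_log (by linarith : 0 < 1 + x)]⟩
  have hinj : InjOn (fun u => exp u - 1) (Ioi 0) := fun a _ b _ h =>
    exp_injective (sub_left_injective h)
  nth_rewrite 1 [← himage]
  rw [integral_image_eq_integral_abs_deriv_smul measurableSet_Ioi
    (fun u _ => ((hasDerivAt_exp u).sub_const 1).hasDerivWithinAt) hinj, ← integral_const_mul]
  refine setIntegral_congr_fun measurableSet_Ioi fun u (hu : 0 < u) => ?_
  simp only [smul_eq_mul, abs_of_pos (exp_pos u), add_sub_cancel, log_exp,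
    rpow_def_of_pos hu, ← exp_add]
  congr 1
  ring

theorem tendsto_atTop_of_mul_exp_eq {W : ℝ → ℝ} (hW : ∀ᶠ t in atTop, W t * exp (W t) = t) :
    Tendsto W atTop atTop := by
  refine tendsto_atTop_mono' _ ?_ (tendsto_log_atTop.atTop_div_const two_pos)
  filter_upwards [hW, eventually_gt_atTop 0] with t hWt ht
  have hle : t ≤ exp (2 * W t) :=
    calc t = W t * exp (W t) := hWt.symm
      _ ≤ exp (W t) * exp (W t) :=
        mul_le_mul_of_nonneg_right (by linarith [add_one_le_exp (W t)]) (exp_nonneg _)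
      _ = exp (2 * W t) := by rw [two_mul, exp_add]
  linarith [(log_le_iff_le_exp ht).2 hle]

namespace LogPowerIntegral

noncomputable def phase (w u : ℝ) : ℝ := w * exp w * log u + u - exp u

noncomputable def phaseDeriv (w u : ℝ) : ℝ := w * exp w / u + 1 - exp u

noncomputable def curvature (w u : ℝ) : ℝ := w * exp w / u ^ 2 + exp u

/-- Small enough for `curvature` to be `~ eʷ` on the window, large enough for
`eʷ * halfWidth w ^ 2 → ∞`: the window holds many standard deviations `e^{-w/2}`. -/
noncomputable def halfWidth (w : ℝ) : ℝ := 1 / w ^ 2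

abbrev window (w : ℝ) : Set ℝ := Icc (w - halfWidth w) (w + halfWidth w)

noncomputable def curvatureLower (w : ℝ) : ℝ := exp (w - halfWidth w)

/-- On the window `u ≥ w / 2`, so `w eʷ / u² ≤ 4 eʷ / w`. -/
noncomputable def curvatureUpper (w : ℝ) : ℝ := exp w * (exp (halfWidth w) + 4 / w)

theorem measurable_phase (w : ℝ) : Measurable (phase w) := by
  unfold phase; fun_prop

theorem hasDerivAt_phase (w : ℝ) {u : ℝ} (hu : 0 < u) :
    HasDerivAt (phase w) (phaseDeriv w u) u := by
  have := (((hasDerivAt_log hu.ne').const_mul (w * exp w)).fun_add (hasDerivAt_id' u)).fun_sub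
    (hasDerivAt_exp u)
  exact this.congr_deriv (by rw [phaseDeriv, div_eq_mul_inv])

theorem hasDerivAt_phaseDeriv (w : ℝ) {u : ℝ} (hu : u ≠ 0) :
    HasDerivAt (phaseDeriv w) (-curvature w u) u := by
  have := (((hasDerivAt_inv hu).const_mul (w * exp w)).add_const 1).fun_sub (hasDerivAt_exp u)
  refine (this.congr_deriv (by rw [curvature]; ring)).congr_of_eventuallyEq
    (Eventually.of_forall fun v => ?_)
  simp [phaseDeriv, div_eq_mul_inv]

theorem phaseDeriv_self {w : ℝ} (hw : w ≠ 0) : phaseDeriv w w = 1 := by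
  simp [phaseDeriv, hw]

theorem curvature_nonneg {w u : ℝ} (hw : 0 ≤ w) (hu : 0 < u) : 0 ≤ curvature w u := by
  unfold curvature; positivity

theorem halfWidth_pos {w : ℝ} (hw : w ≠ 0) : 0 < halfWidth w := by
  unfold halfWidth; positivity

theorem halfWidth_le_one {w : ℝ} (hw : 1 ≤ w) : halfWidth w ≤ 1 := by
  unfold halfWidth; rw [div_le_one (by positivity)]; nlinarith

theorem tendsto_halfWidth_atTop : Tendsto halfWidth atTop (𝓝 0) :=
  (tendsto_pow_atTop (α := ℝ) two_ne_zero).inv_tendsto_atTop.congr fun w => by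
    simp [halfWidth]

section Window

variable {w : ℝ}

theorem self_mem_window (hw : 2 ≤ w) : w ∈ window w := by
  have := halfWidth_pos (by linarith : w ≠ 0); constructor <;> linarith

theorem half_le_of_mem_window (hw : 2 ≤ w) {u : ℝ} (hu : u ∈ window w) : w / 2 ≤ u := by
  linarith [hu.1, halfWidth_le_one (by linarith : (1 : ℝ) ≤ w)]

theorem curvature_mem_Icc (hw : 2 ≤ w) {u : ℝ} (hu : u ∈ window w) :
    curvature w u ∈ Icc (curvatureLower w) (curvatureUpper w) := by
  have hu2 := half_le_of_mem_window hw hu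
  have hu0 : 0 < u := by linarith
  constructor
  · have : 0 ≤ w * exp w / u ^ 2 := by positivity
    linarith [exp_le_exp.2 hu.1, show curvatureLower w = exp (w - halfWidth w) from rfl,
      show curvature w u = w * exp w / u ^ 2 + exp u from rfl]
  · have hfirst : w * exp w / u ^ 2 ≤ exp w * (4 / w) := by
      rw [div_le_iff₀ (by positivity), mul_assoc]
      refine le_of_eq_of_le (mul_comm _ _) (mul_le_mul_of_nonneg_left ?_ (exp_nonneg w))
      rw [div_mul_eq_mul_div, le_div_iff₀ (by linarith)]
      nlinarith
    have hsecond : exp u ≤ exp w * exp (halfWidth w) := by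
      rw [← exp_add]; exact exp_le_exp.2 hu.2
    rw [curvature, curvatureUpper, mul_add]
    linarith

theorem hasDerivAt_phase_of_mem_window (hw : 2 ≤ w) :
    ∀ u ∈ window w, HasDerivAt (phase w) (phaseDeriv w u) u :=
  fun _ hu => hasDerivAt_phase w (by linarith [half_le_of_mem_window hw hu])

theorem hasDerivAt_phaseDeriv_of_mem_window (hw : 2 ≤ w) :
    ∀ u ∈ window w, HasDerivAt (phaseDeriv w) (-curvature w u) u :=
  fun _ hu => hasDerivAt_phaseDeriv w (by linarith [half_le_of_mem_window hw hu])

theorem phase_le_quadratic (hw : 2 ≤ w) {u : ℝ} (hu : u ∈ window w) :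
    phase w u ≤ phase w w + (u - w) - curvatureLower w * (u - w) ^ 2 / 2 := by
  have := le_quadratic_of_deriv2_le (convex_Icc _ _) (hasDerivAt_phase_of_mem_window hw)
    (hasDerivAt_phaseDeriv_of_mem_window hw) (fun v hv => neg_le_neg (curvature_mem_Icc hw hv).1)
    (self_mem_window hw) hu
  rwa [phaseDeriv_self (by linarith), one_mul] at this

theorem quadratic_le_phase (hw : 2 ≤ w) {u : ℝ} (hu : u ∈ window w) :
    phase w w + (u - w) - curvatureUpper w * (u - w) ^ 2 / 2 ≤ phase w u := by
  have := quadratic_le_of_le_deriv2 (convex_Icc _ _) (hasDerivAt_phase_of_mem_window hw)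
    (hasDerivAt_phaseDeriv_of_mem_window hw) (fun v hv => neg_le_neg (curvature_mem_Icc hw hv).2)
    (self_mem_window hw) hu
  rwa [phaseDeriv_self (by linarith), one_mul] at this

theorem antitoneOn_phaseDeriv_add_mul (hw : 2 ≤ w) :
    AntitoneOn (fun u => phaseDeriv w u + curvatureLower w * u) (window w) :=
  antitoneOn_add_mul_of_hasDerivAt_le (convex_Icc _ _) (hasDerivAt_phaseDeriv_of_mem_window hw)
    (fun _ hv => neg_le_neg (curvature_mem_Icc hw hv).1)

theorem phaseDeriv_add_halfWidth_le (hw : 2 ≤ w) :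
    phaseDeriv w (w + halfWidth w) ≤ 1 - curvatureLower w * halfWidth w := by
  have hδ := halfWidth_pos (by linarith : w ≠ 0)
  have := antitoneOn_phaseDeriv_add_mul hw (self_mem_window hw)
    (show w + halfWidth w ∈ window w from ⟨by linarith, le_rfl⟩) (by linarith)
  simp only [phaseDeriv_self (by linarith : w ≠ 0)] at this
  linarith

theorem le_phaseDeriv_sub_halfWidth (hw : 2 ≤ w) :
    1 + curvatureLower w * halfWidth w ≤ phaseDeriv w (w - halfWidth w) := by
  have hδ := halfWidth_pos (by linarith : w ≠ 0)
  have := antitoneOn_phaseDeriv_add_mul hw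
    (show w - halfWidth w ∈ window w from ⟨le_rfl, by linarith⟩) (self_mem_window hw)
    (by linarith)
  simp only [phaseDeriv_self (by linarith : w ≠ 0)] at this
  linarith

theorem phase_le_tangent (hw : 0 ≤ w) {a u : ℝ} (ha : 0 < a) (hu : 0 < u) :
    phase w u ≤ phase w a + phaseDeriv w a * (u - a) := by
  simpa using le_quadratic_of_deriv2_le (c := 0) (convex_Ioi 0)
    (fun v hv => hasDerivAt_phase w hv) (fun v hv => hasDerivAt_phaseDeriv w (ne_of_gt hv))
    (fun v hv => by simpa using curvature_nonneg hw hv) ha hu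

theorem phase_window_edge_le (hw : 2 ≤ w) {u : ℝ} (hu : u = w - halfWidth w ∨ u = w + halfWidth w) :
    phase w u ≤ phase w w + (halfWidth w - curvatureLower w * halfWidth w ^ 2 / 2) := by
  have hδ := halfWidth_pos (by linarith : w ≠ 0)
  have hmem : u ∈ window w := by rcases hu with rfl | rfl <;> constructor <;> linarith
  have hsq : (u - w) ^ 2 = halfWidth w ^ 2 := by rcases hu with rfl | rfl <;> ring
  have := phase_le_quadratic hw hmem
  rw [hsq] at this
  linarith [hmem.2]

noncomputable def upperBound (w : ℝ) : ℝ :=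
  exp (halfWidth w) * √(2 * π / curvatureLower w) +
    (w + 1) * exp (halfWidth w - curvatureLower w * halfWidth w ^ 2 / 2)

noncomputable def lowerBound (w : ℝ) : ℝ :=
  exp (-halfWidth w) * (√(2 * π / curvatureUpper w) -
    exp (-(curvatureUpper w * halfWidth w ^ 2 / 4)) * √(2 * π / (curvatureUpper w / 2)))

theorem integrableOn_exp_phase_and_le (hw : 2 ≤ w)
    (hcδ : 2 ≤ curvatureLower w * halfWidth w) :
    IntegrableOn (fun u => exp (phase w u)) (Ioi 0) ∧
      ∫ u in Ioi 0, exp (phase w u) ≤ exp (phase w w) * upperBound w := by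
  set δ := halfWidth w
  set c := curvatureLower w
  have hδ := halfWidth_pos (by linarith : w ≠ 0)
  have hδ1 := halfWidth_le_one (by linarith : (1 : ℝ) ≤ w)
  have hp := le_phaseDeriv_sub_halfWidth hw
  have hq := phaseDeriv_add_halfWidth_le hw
  have hp0 : 0 < w - δ := by linarith
  obtain ⟨hint, hle⟩ := integrableOn_Ioi_exp_and_setIntegral_le (measurable_phase w)
    (p := w - δ) (q := w + δ) (w := w) (K := phase w w + (δ - c * δ ^ 2 / 2))
    (A := phase w w + δ) (B := phase w w + (δ - c * δ ^ 2 / 2)) (c := c) (a := 1 - c * δ)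
    hp0 (by linarith) (exp_pos _) (by linarith)
    (fun u hu => by
      have := phase_le_tangent (w := w) (by linarith) hp0 hu.1
      nlinarith [phase_window_edge_le hw (u := w - δ) (.inl rfl), hu.2])
    (fun u hu => by nlinarith [phase_le_quadratic hw hu, hu.2])
    (fun u (hu : w + δ < u) => by
      have := phase_le_tangent (w := w) (a := w + δ) (by linarith) (by linarith)
        (by linarith : 0 < u)
      nlinarith [phase_window_edge_le hw (u := w + δ) (.inr rfl)])
  refine ⟨hint, hle.trans ?_⟩
  simp only [exp_add]
  set X := exp (phase w w) * exp (δ - c * δ ^ 2 / 2)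
  have hleft : (w - δ) * X ≤ w * X := mul_le_mul_of_nonneg_right (by linarith) (by positivity)
  have hright : X / -(1 - c * δ) ≤ X := div_le_self (by positivity) (by linarith)
  change _ ≤ exp (phase w w) * (exp δ * √(2 * π / c) + (w + 1) * exp (δ - c * δ ^ 2 / 2))
  linarith

theorem le_integral_exp_phase (hw : 2 ≤ w)
    (hint : IntegrableOn (fun u => exp (phase w u)) (Ioi 0)) :
    exp (phase w w) * lowerBound w ≤ ∫ u in Ioi 0, exp (phase w u) := by
  have hδ := halfWidth_pos (by linarith : w ≠ 0)
  have hC : 0 < curvatureUpper w := by unfold curvatureUpper; positivity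
  have hsub : window w ⊆ Ioi 0 := fun u hu =>
    mem_Ioi.2 (by linarith [half_le_of_mem_window hw hu])
  have := le_setIntegral_Icc_exp (A := phase w w - halfWidth w) hδ.le hC (hint.mono_set hsub)
    fun u hu => by nlinarith [quadratic_le_phase hw hu, hu.1]
  rw [lowerBound, ← mul_assoc, ← exp_add, ← sub_eq_add_neg]
  exact this.trans (setIntegral_mono_set hint
    (ae_restrict_of_forall_mem measurableSet_Ioi fun _ _ => exp_nonneg _)
    (Eventually.of_forall hsub))

noncomputable def normalizedIntegral (w : ℝ) : ℝ :=
  (∫ u in Ioi 0, exp (phase w u)) / (√(2 * π) * exp (phase w w) * exp (-(w / 2)))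

theorem normalizedIntegral_mem_Icc (hw : 2 ≤ w) (hcδ : 2 ≤ curvatureLower w * halfWidth w) :
    normalizedIntegral w ∈ Icc (lowerBound w * exp (w / 2) / √(2 * π))
      (upperBound w * exp (w / 2) / √(2 * π)) := by
  obtain ⟨hint, hupper⟩ := integrableOn_exp_phase_and_le hw hcδ
  have hD : 0 < √(2 * π) * exp (phase w w) * exp (-(w / 2)) := by positivity
  have hscale : ∀ x, x * exp (w / 2) / √(2 * π) =
      exp (phase w w) * x / (√(2 * π) * exp (phase w w) * exp (-(w / 2))) := fun x => by
    rw [exp_neg]; field_simp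
  rw [hscale, hscale, normalizedIntegral]
  exact ⟨div_le_div_of_nonneg_right (le_integral_exp_phase hw hint) hD.le,
    div_le_div_of_nonneg_right hupper hD.le⟩

end Window

theorem eventually_le_curvatureLower_mul_halfWidth_sq :
    ∀ᶠ w in atTop, 2 * w + 1 ≤ curvatureLower w * halfWidth w ^ 2 / 2 := by
  filter_upwards [(tendsto_exp_div_pow_atTop 5).eventually_ge_atTop (6 * exp 1),
    eventually_ge_atTop 1] with w h5 hw
  have hexp : 6 * exp 1 * w ^ 5 ≤ exp w := (le_div_iff₀ (by positivity)).1 h5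
  have hc : exp w / exp 1 ≤ curvatureLower w := by
    rw [← exp_sub]; exact exp_le_exp.2 (by linarith [halfWidth_le_one hw])
  have : 6 * w ≤ exp w / exp 1 * (1 / w ^ 4) := by
    rw [div_mul_div_comm, mul_one, le_div_iff₀ (by positivity)]
    nlinarith [exp_pos 1]
  rw [show halfWidth w ^ 2 = 1 / w ^ 4 by rw [halfWidth]; ring]
  nlinarith [mul_le_mul_of_nonneg_right hc (by positivity : (0 : ℝ) ≤ 1 / w ^ 4)]

theorem tendsto_upperBound_mul :
    Tendsto (fun w => upperBound w * exp (w / 2) / √(2 * π)) atTop (𝓝 1) := by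
  have hδ : Tendsto (fun w => exp (halfWidth w)) atTop (𝓝 1) := by
    have := (continuous_exp.tendsto 0).comp tendsto_halfWidth_atTop
    rwa [exp_zero] at this
  have hmain : Tendsto (fun w => √(2 * π / curvatureLower w) * exp (w / 2) / √(2 * π)) atTop
      (𝓝 1) := by
    have := tendsto_sqrt_div_mul_exp_half (Eventually.of_forall fun w => exp_pos _)
      (hδ.congr fun w => show exp (halfWidth w) = exp w / curvatureLower w by
        rw [curvatureLower, exp_sub, div_div_cancel₀ (exp_ne_zero w)])
    rwa [sqrt_one] at this
  have hdecay : Tendsto (fun w : ℝ => (w + 1) * exp (-w)) atTop (𝓝 0) := by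
    simpa [add_mul] using (tendsto_pow_mul_exp_neg_atTop_nhds_zero 1).add
      tendsto_exp_neg_atTop_nhds_zero
  have htail : Tendsto (fun w => (w + 1) *
      exp (halfWidth w - curvatureLower w * halfWidth w ^ 2 / 2) * exp (w / 2) / √(2 * π))
      atTop (𝓝 0) := by
    refine squeeze_zero' ?_ ?_ hdecay
    · filter_upwards [eventually_ge_atTop 0] with w hw
      positivity
    · filter_upwards [eventually_le_curvatureLower_mul_halfWidth_sq, eventually_ge_atTop 1]
        with w hc hw
      have hsqrt : 1 ≤ √(2 * π) := one_le_sqrt.2 (by nlinarith [pi_gt_three])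
      rw [mul_assoc, div_le_iff₀ (by positivity), ← exp_add]
      have : exp (halfWidth w - curvatureLower w * halfWidth w ^ 2 / 2 + w / 2) ≤ exp (-w) :=
        exp_le_exp.2 (by linarith [halfWidth_le_one hw])
      have : 0 ≤ (w + 1) * exp (-w) := by positivity
      nlinarith [mul_le_mul_of_nonneg_left this (by linarith : (0 : ℝ) ≤ w + 1)]
  have := (hδ.mul hmain).add htail
  rw [one_mul, add_zero] at this
  exact this.congr fun w => by rw [upperBound]; ring

theorem tendsto_lowerBound_mul :
    Tendsto (fun w => lowerBound w * exp (w / 2) / √(2 * π)) atTop (𝓝 1) := by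
  have hδ : Tendsto (fun w => exp (-halfWidth w)) atTop (𝓝 1) := by
    have := (continuous_exp.tendsto (-0)).comp tendsto_halfWidth_atTop.neg
    rwa [neg_zero, exp_zero] at this
  have hC : ∀ᶠ w in atTop, 0 < curvatureUpper w := by
    filter_upwards [eventually_gt_atTop 0] with w hw
    unfold curvatureUpper; positivity
  have hratio : Tendsto (fun w => exp w / curvatureUpper w) atTop (𝓝 1) := by
    have hsum : Tendsto (fun w => exp (halfWidth w) + 4 / w) atTop (𝓝 1) := by
      have := ((continuous_exp.tendsto 0).comp tendsto_halfWidth_atTop).add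
        ((tendsto_const_nhds (x := (4 : ℝ))).div_atTop tendsto_id)
      rwa [exp_zero, add_zero] at this
    have := hsum.inv₀ one_ne_zero
    rw [inv_one] at this
    exact this.congr fun w => by rw [curvatureUpper, div_mul_cancel_left₀ (exp_ne_zero w)]
  have hmain := tendsto_sqrt_div_mul_exp_half hC hratio
  have hhalf := tendsto_sqrt_div_mul_exp_half (hC.mono fun w hw => half_pos hw)
    ((hratio.const_mul 2).congr fun w => by field_simp)
  have hgap : Tendsto (fun w => exp (-(curvatureUpper w * halfWidth w ^ 2 / 4))) atTop
      (𝓝 0) := by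
    refine tendsto_exp_neg_atTop_nhds_zero.comp (tendsto_atTop_mono' _ ?_
      ((tendsto_exp_div_pow_atTop 4).atTop_div_const (by norm_num : (0 : ℝ) < 4)))
    filter_upwards [eventually_gt_atTop 0] with w hw
    have h1 : 1 ≤ exp (halfWidth w) + 4 / w := by
      linarith [one_le_exp (halfWidth_pos hw.ne').le, div_pos four_pos hw]
    rw [curvatureUpper, halfWidth, div_pow, one_pow, ← pow_mul]
    gcongr
    calc exp w / w ^ 4 = exp w * 1 * (1 / w ^ (2 * 2)) := by ring
      _ ≤ exp w * (exp (1 / w ^ 2) + 4 / w) * (1 / w ^ (2 * 2)) := by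
        gcongr; rwa [← halfWidth]
  have := hδ.mul (hmain.sub (hgap.mul hhalf))
  rw [sqrt_one, zero_mul, sub_zero, one_mul] at this
  exact this.congr fun w => by rw [lowerBound]; ring

theorem tendsto_normalizedIntegral : Tendsto normalizedIntegral atTop (𝓝 1) := by
  have hbounds : ∀ᶠ w in atTop, normalizedIntegral w ∈
      Icc (lowerBound w * exp (w / 2) / √(2 * π)) (upperBound w * exp (w / 2) / √(2 * π)) := by
    filter_upwards [eventually_ge_atTop 2, eventually_le_curvatureLower_mul_halfWidth_sq]
      with w hw hc
    refine normalizedIntegral_mem_Icc hw ?_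
    have hδ := halfWidth_pos (by linarith : w ≠ 0)
    have hδ1 := halfWidth_le_one (by linarith : (1 : ℝ) ≤ w)
    nlinarith [exp_pos (w - halfWidth w), show curvatureLower w = exp (w - halfWidth w) from rfl]
  exact tendsto_of_tendsto_of_tendsto_of_le_of_le' tendsto_lowerBound_mul tendsto_upperBound_mul
    (hbounds.mono fun _ h => h.1) (hbounds.mono fun _ h => h.2)

theorem sqrt_mul_rpow_mul_exp_eq {w : ℝ} (hw : 0 < w) :
    √(2 * π * (w * exp w)) * w ^ (w * exp w - 1 / 2) * exp (-(w * exp w) / w) =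
      √(2 * π) * exp (phase w w) * exp (-(w / 2)) := by
  have hsqrt : √(w * exp w) = exp (log w / 2 + w / 2) := by
    rw [exp_add, exp_half, exp_half, exp_log hw, ← sqrt_mul hw.le]
  rw [sqrt_mul (by positivity), hsqrt, rpow_def_of_pos hw, neg_div,
    mul_div_cancel_left₀ _ hw.ne', phase]
  simp only [mul_assoc, ← exp_add]
  congr 2
  ring

theorem div_eq_normalizedIntegral {t w : ℝ} (hw : 0 < w) (hwt : w * exp w = t) :
    (∫ x in Ioi 0, log (1 + x) ^ t * exp (-x)) /
        (exp 1 * √(2 * π * t) * w ^ (t - 1 / 2) * exp (-t / w)) = normalizedIntegral w := by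
  subst hwt
  rw [integral_log_one_add_rpow_mul_exp_neg, mul_assoc, mul_assoc, ← mul_assoc (√_),
    sqrt_mul_rpow_mul_exp_eq hw, mul_div_mul_left _ _ (exp_ne_zero 1)]
  rfl

end LogPowerIntegral

/-- **Asymptotics of `S(t) = ∫_0^∞ (ln(1+x))ᵗ e^{-x} dx`.** With `W` the Lambert
W-function, `S(t) = e √(2πt) W(t)^{t-1/2} e^{-t/W(t)} (1 + o(1))` as `t → ∞`. -/
theorem laplace_asymptotics_of_S
    (W : ℝ → ℝ)
    (hW : ∀ t : ℝ, 0 ≤ t → 0 ≤ W t ∧ W t * Real.exp (W t) = t)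
    (S : ℝ → ℝ)
    (hS : ∀ t : ℝ, 0 ≤ t →
      S t = ∫ x in Set.Ioi (0 : ℝ), (Real.log (1 + x)) ^ t * Real.exp (-x)) :
    Tendsto
      (fun t : ℝ =>
        S t / (Real.exp 1 * Real.sqrt (2 * Real.pi * t) * W t ^ (t - 1 / 2) *
          Real.exp (-t / W t)))
      atTop (𝓝 1) := by
  have hWtop : Tendsto W atTop atTop :=
    tendsto_atTop_of_mul_exp_eq ((eventually_ge_atTop 0).mono fun t ht => (hW t ht).2)
  refine (LogPowerIntegral.tendsto_normalizedIntegral.comp hWtop).congr' ?_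
  filter_upwards [eventually_gt_atTop 0] with t ht
  have hWt := (hW t ht.le).2
  have hWpos : 0 < W t := pos_of_mul_pos_left (hWt ▸ ht) (exp_pos _).le
  rw [Function.comp_apply, hS t ht.le, LogPowerIntegral.div_eq_normalizedIntegral hWpos hWt]
end

section
/- Let W : [0, ∞) → [0, ∞) be the Lambert W function, i.e., W(t) ≥ 0 and W(t) e^{W(t)} = t for all t ≥ 0. Then (W(t+1)/W(t))^t → 1 as t → ∞. -/
open Real Filter Topology

/-!
Taking logarithms in `W t * exp (W t) = t` gives `log (W t) + W t = log t`. Since `W` is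
increasing, `W (t + 1) - W t ≤ log (t + 1) - log t ≤ 1 / t`, hence
`0 ≤ t * log (W (t + 1) / W t) ≤ t * (W (t + 1) - W t) / W t ≤ 1 / W t`,
and the right-hand side tends to `0` because `log t ≤ 2 W t`.
-/

def IsLambertW (W : ℝ → ℝ) : Prop :=
  ∀ t : ℝ, 0 ≤ t → 0 ≤ W t ∧ W t * exp (W t) = t

namespace IsLambertW

variable {W : ℝ → ℝ} {t : ℝ}

lemma nonneg (hW : IsLambertW W) (ht : 0 ≤ t) : 0 ≤ W t := (hW t ht).1

lemma mul_exp (hW : IsLambertW W) (ht : 0 ≤ t) : W t * exp (W t) = t := (hW t ht).2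

lemma pos (hW : IsLambertW W) (ht : 0 < t) : 0 < W t := by
  refine (hW.nonneg ht.le).lt_of_ne fun h => ht.ne ?_
  rw [← hW.mul_exp ht.le, ← h, zero_mul]

lemma monotoneOn (hW : IsLambertW W) : MonotoneOn W (Set.Ici 0) := by
  intro s hs t ht hst
  by_contra! h
  have := mul_lt_mul'' h (exp_lt_exp.2 h) (hW.nonneg ht) (exp_pos _).le
  rw [hW.mul_exp hs, hW.mul_exp ht] at this
  linarith

lemma log_add_self (hW : IsLambertW W) (ht : 0 < t) : log (W t) + W t = log t := by
  conv_rhs => rw [← hW.mul_exp ht.le]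
  rw [log_mul (hW.pos ht).ne' (exp_pos _).ne', log_exp]

lemma log_le_two_mul (hW : IsLambertW W) (ht : 0 < t) : log t ≤ 2 * W t := by
  rw [log_le_iff_le_exp ht]
  calc t = W t * exp (W t) := (hW.mul_exp ht.le).symm
    _ ≤ exp (W t) * exp (W t) := by
        gcongr; linarith [add_one_le_exp (W t)]
    _ = exp (2 * W t) := by rw [← exp_add, two_mul]

lemma tendsto_atTop (hW : IsLambertW W) : Tendsto W atTop atTop := by
  refine tendsto_atTop_mono' _ ?_ (tendsto_log_atTop.atTop_div_const two_pos)
  filter_upwards [eventually_gt_atTop 0] with t ht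
  linarith [hW.log_le_two_mul ht]

lemma add_one_sub_le_inv (hW : IsLambertW W) (ht : 0 < t) : W (t + 1) - W t ≤ t⁻¹ := by
  have hlog : log (W t) ≤ log (W (t + 1)) :=
    log_le_log (hW.pos ht) (hW.monotoneOn ht.le (Set.mem_Ici.2 (by linarith)) (by linarith))
  have hlog_succ : log (t + 1) - log t ≤ t⁻¹ := by
    rw [← log_div (by linarith) ht.ne']
    calc log ((t + 1) / t) ≤ (t + 1) / t - 1 := log_le_sub_one_of_pos (by positivity)
      _ = t⁻¹ := by field_simp; ring
  linarith [hW.log_add_self ht, hW.log_add_self (show 0 < t + 1 by linarith)]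

lemma one_le_ratio (hW : IsLambertW W) (ht : 0 < t) : 1 ≤ W (t + 1) / W t := by
  rw [one_le_div (hW.pos ht)]
  exact hW.monotoneOn ht.le (Set.mem_Ici.2 (by linarith)) (by linarith)

lemma mul_log_ratio_le (hW : IsLambertW W) (ht : 0 < t) :
    t * log (W (t + 1) / W t) ≤ (W t)⁻¹ := by
  have hWt := hW.pos ht
  calc t * log (W (t + 1) / W t) ≤ t * (W (t + 1) / W t - 1) := by
        gcongr; exact log_le_sub_one_of_pos (by linarith [hW.one_le_ratio ht])
    _ = t * (W (t + 1) - W t) * (W t)⁻¹ := by field_simp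
    _ ≤ t * t⁻¹ * (W t)⁻¹ := by gcongr; exact hW.add_one_sub_le_inv ht
    _ = (W t)⁻¹ := by rw [mul_inv_cancel₀ ht.ne', one_mul]

lemma tendsto_mul_log_ratio (hW : IsLambertW W) :
    Tendsto (fun t => t * log (W (t + 1) / W t)) atTop (𝓝 0) := by
  refine tendsto_of_tendsto_of_tendsto_of_le_of_le' tendsto_const_nhds
    hW.tendsto_atTop.inv_tendsto_atTop ?_ ?_
  · filter_upwards [eventually_gt_atTop 0] with t ht
    exact mul_nonneg ht.le (log_nonneg (hW.one_le_ratio ht))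
  · filter_upwards [eventually_gt_atTop 0] with t ht
    exact hW.mul_log_ratio_le ht

end IsLambertW

/-- For the Lambert W function, `(W(t+1)/W(t))ᵗ → 1` as `t → ∞`. -/
theorem lambertW_ratio_pow_tendsto_one
    (W : ℝ → ℝ)
    (hW : ∀ t : ℝ, 0 ≤ t → 0 ≤ W t ∧ W t * Real.exp (W t) = t) :
    Tendsto (fun t : ℝ => (W (t + 1) / W t) ^ t) atTop (𝓝 1) := by
  have hW : IsLambertW W := hW
  have hexp := (continuous_exp.tendsto 0).comp hW.tendsto_mul_log_ratio
  rw [exp_zero] at hexp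
  refine hexp.congr' ?_
  filter_upwards [eventually_gt_atTop 0] with t ht
  rw [Function.comp_apply, rpow_def_of_pos (by linarith [hW.one_le_ratio ht]), mul_comm]
end
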